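/- arXiv:1712.01245 — 2 statements merged into one kernel-verified Lean document; each statement's English description precedes it below -/
import Mathlib

section
/- For every finite simple connected graph G = (V,E) and every real λ with 0 < λ < 1, the sum over all vertices u of the exponential transmission t_λ(u) = Σ_{v∈V, v≠u} d(u,v)·λ^{d(u,v)} equals the sum over all vertices u of the exponential betweenness centrality c_λ(u) = Σ_{v adjacent to u} Σ_{unordered pairs {k,l}⊆V} (s_{uv}^{kl}/s^{kl})·λ^{d(k,l)}, and both equal Σ over all ordered pairs (k,l)∈V×V of d(k,l)·λ^{d(k,l)}. -/
open SimpleGraph Finset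

noncomputable def tExp {V : Type*} [Fintype V] (G : SimpleGraph V) (lam : ℝ) (u : V) : ℝ :=
  letI := Classical.decEq V
  ∑ v ∈ Finset.univ.erase u, (G.dist u v : ℝ) * lam ^ (G.dist u v)

noncomputable def numSP {V : Type*} [Fintype V] (G : SimpleGraph V) (k l : V) : ℕ :=
  letI := Classical.decEq V
  letI := Classical.decRel G.Adj
  (G.finsetWalkLength (G.dist k l) k l).card

noncomputable def numSPedge {V : Type*} [Fintype V] (G : SimpleGraph V) (u v k l : V) : ℕ :=
  letI := Classical.decEq V
  letI := Classical.decRel G.Adj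
  ((G.finsetWalkLength (G.dist k l) k l).filter (fun p => s(u, v) ∈ p.edges)).card

noncomputable def bExp {V : Type*} [Fintype V] (G : SimpleGraph V) (lam : ℝ) (u v : V) : ℝ :=
  (1 / 2) * ∑ k : V, ∑ l : V, ((numSPedge G u v k l : ℝ) / (numSP G k l)) * lam ^ (G.dist k l)

noncomputable def cExp {V : Type*} [Fintype V] (G : SimpleGraph V) (lam : ℝ) (u : V) : ℝ :=
  letI := Classical.decRel G.Adj
  ∑ v ∈ G.neighborFinset u, bExp G lam u v

/-! A shortest `k`–`l` walk is a path with `d(k,l)` edges, so it passes through exactly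
`2 d(k,l)` ordered pairs `(u,v)` with `s(u,v)` among its edges. Double counting over the
`s^{kl}` shortest walks gives `Σ_{u,v} s^{kl}_{uv} = 2 d(k,l) s^{kl}`, hence the pair `(k,l)`
contributes `d(k,l) λ^{d(k,l)}` to `Σ_u c_λ(u)`. -/

theorem SimpleGraph.Walk.IsTrail.card_filter_mk_mem_edges {V : Type*} [Fintype V] [DecidableEq V]
    {G : SimpleGraph V} {a b : V} {p : G.Walk a b} (hp : p.IsTrail) :
    #{x : V × V | s(x.1, x.2) ∈ p.edges} = 2 * p.length := by
  classical
  let H := fromEdgeSet {e | e ∈ p.edges}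
  have hadj : ∀ x y, H.Adj x y ↔ s(x, y) ∈ p.edges := fun x y =>
    ⟨fun h => h.1, fun h => ⟨h, (p.adj_of_mem_edges h).ne⟩⟩
  have hedges : H.edgeFinset = p.edges.toFinset := by
    ext e
    induction e using Sym2.ind with
    | _ x y => simpa using hadj x y
  calc #{x : V × V | s(x.1, x.2) ∈ p.edges}
      = #{x : V × V | H.Adj x.1 x.2} := by simp only [hadj]
    _ = 2 * #p.edges.toFinset := by rw [← hedges]; convert H.two_mul_card_edgeFinset.symm
    _ = 2 * p.length := by rw [List.toFinset_card_of_nodup hp.edges_nodup, p.length_edges]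

section

variable {V : Type*} [Fintype V]

theorem tExp_eq_sum (G : SimpleGraph V) (lam : ℝ) (u : V) :
    tExp G lam u = ∑ v, (G.dist u v : ℝ) * lam ^ G.dist u v := by
  classical
  exact sum_erase _ (by simp)

theorem numSP_pos {G : SimpleGraph V} {k l : V} (h : G.Reachable k l) : 0 < numSP G k l := by
  classical
  obtain ⟨p, hp⟩ := h.exists_walk_length_eq_dist
  exact card_pos.mpr ⟨p, mem_finsetWalkLength_iff.mpr hp⟩

theorem numSPedge_eq_zero_of_not_adj {G : SimpleGraph V} {u v : V} (h : ¬G.Adj u v) (k l : V) :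
    numSPedge G u v k l = 0 := by
  simp only [numSPedge, card_eq_zero, filter_eq_empty_iff]
  exact fun p _ hp => h (p.adj_of_mem_edges hp)

theorem cExp_eq_sum_bExp (G : SimpleGraph V) (lam : ℝ) (u : V) :
    cExp G lam u = ∑ v, bExp G lam u v := by
  refine sum_subset (subset_univ _) fun v _ hv => ?_
  rw [mem_neighborFinset] at hv
  simp [bExp, numSPedge_eq_zero_of_not_adj hv]

theorem sum_sum_numSPedge (G : SimpleGraph V) (k l : V) :
    ∑ u, ∑ v, numSPedge G u v k l = 2 * G.dist k l * numSP G k l := by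
  classical
  simp only [numSPedge, numSP]
  rw [← Fintype.sum_prod_type']
  calc ∑ x : V × V, #{p ∈ G.finsetWalkLength (G.dist k l) k l | s(x.1, x.2) ∈ p.edges}
      = ∑ p ∈ G.finsetWalkLength (G.dist k l) k l, #{x : V × V | s(x.1, x.2) ∈ p.edges} :=
        sum_card_bipartiteAbove_eq_sum_card_bipartiteBelow _
    _ = ∑ _p ∈ G.finsetWalkLength (G.dist k l) k l, 2 * G.dist k l := by
        refine sum_congr rfl fun p hp => ?_
        have hlen := mem_finsetWalkLength_iff.mp hp
        rw [(p.isPath_of_length_eq_dist hlen).isTrail.card_filter_mk_mem_edges, hlen]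
    _ = 2 * G.dist k l * #(G.finsetWalkLength (G.dist k l) k l) := by
        rw [sum_const, smul_eq_mul, mul_comm]

theorem half_sum_sum_numSPedge_div_numSP (G : SimpleGraph V) (lam : ℝ) (k l : V) :
    1 / 2 * ∑ u, ∑ v, (numSPedge G u v k l : ℝ) / numSP G k l * lam ^ G.dist k l
      = G.dist k l * lam ^ G.dist k l := by
  have hcount : ∑ u, ∑ v, (numSPedge G u v k l : ℝ) = 2 * G.dist k l * numSP G k l := by
    exact_mod_cast sum_sum_numSPedge G k l
  simp_rw [← sum_mul, ← sum_div, hcount]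
  by_cases h : G.Reachable k l
  · have := numSP_pos h
    field_simp
  · simp [dist_eq_zero_of_not_reachable h]

theorem sum_cExp (G : SimpleGraph V) (lam : ℝ) :
    ∑ u, cExp G lam u = ∑ k, ∑ l, (G.dist k l : ℝ) * lam ^ G.dist k l := by
  have hswap := sum_comm (s := (univ : Finset (V × V))) (t := (univ : Finset (V × V)))
    (f := fun x y => 1 / 2 * ((numSPedge G x.1 x.2 y.1 y.2 : ℝ) / numSP G y.1 y.2 *
      lam ^ G.dist y.1 y.2))
  simp only [Fintype.sum_prod_type] at hswap
  simp only [cExp_eq_sum_bExp, bExp, mul_sum, hswap, ← half_sum_sum_numSPedge_div_numSP G lam]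

end

theorem stmt0_general {V : Type*} [Fintype V] (G : SimpleGraph V) (lam : ℝ) :
    (∑ u : V, tExp G lam u = ∑ k : V, ∑ l : V, (G.dist k l : ℝ) * lam ^ (G.dist k l)) ∧
    (∑ u : V, cExp G lam u = ∑ k : V, ∑ l : V, (G.dist k l : ℝ) * lam ^ (G.dist k l)) :=
  ⟨by simp only [tExp_eq_sum], sum_cExp G lam⟩

theorem stmt0 {V : Type*} [Fintype V] (G : SimpleGraph V) (hG : G.Connected)
    (lam : ℝ) (h0 : 0 < lam) (h1 : lam < 1) :
    (∑ u : V, tExp G lam u = ∑ k : V, ∑ l : V, (G.dist k l : ℝ) * lam ^ (G.dist k l)) ∧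
    (∑ u : V, cExp G lam u = ∑ k : V, ∑ l : V, (G.dist k l : ℝ) * lam ^ (G.dist k l)) :=
  stmt0_general G lam
end

section
/- For every finite simple connected graph G on n vertices and λ ∈ (0,1), the minimum over vertices u of the exponential transmission t_λ(u) = Σ_{v≠u} d(u,v)·λ^{d(u,v)} is at least min over D ∈ {1,…,n−1} of (Σ_{i=1}^{D} i·λ^i) + (n−D−1)·D·λ^D. -/
/-!
Let `E` be the largest distance from `u`. A geodesic from `u` to a farthest vertex meets every
distance `1, …, E` exactly once, so the distances from `u` to the other `n - 1` vertices cover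
`{1, …, E}`. With `g d = d λ^d` and `D` a minimiser of `g` on `{1, …, E}`, one representative of
each distance contributes `∑_{i ≤ E} g i ≥ ∑_{i ≤ D} g i + (E - D) g D`, and each of the remaining
`n - 1 - E` vertices contributes at least `g D`.
-/

open SimpleGraph Finset

theorem Finset.sum_Icc_add_mul_le_sum_Icc {g : ℕ → ℝ} {D E : ℕ} (hDE : D ≤ E)
    (hD : ∀ i ∈ Ioc D E, g D ≤ g i) :
    ∑ i ∈ Icc 1 D, g i + ((E - D : ℕ) : ℝ) * g D ≤ ∑ i ∈ Icc 1 E, g i := by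
  have htail : ((E - D : ℕ) : ℝ) * g D ≤ ∑ i ∈ Ioc D E, g i := by
    simpa using card_nsmul_le_sum (Ioc D E) g (g D) hD
  have hsplit := sum_Ioc_consecutive g (Nat.zero_le D) hDE
  simp only [← Icc_add_one_left_eq_Ioc 0, zero_add] at hsplit
  linarith

theorem Finset.exists_sum_Icc_add_mul_le_sum_comp {α : Type*} {T : Finset α} (hT : T.Nonempty)
    {f : α → ℕ} {E : ℕ} (himage : T.image f = Icc 1 E) (g : ℕ → ℝ) :
    ∃ D ∈ Icc 1 #T, ∑ i ∈ Icc 1 D, g i + ((#T - D : ℕ) : ℝ) * g D ≤ ∑ v ∈ T, g (f v) := by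
  classical
  obtain ⟨D, hD, hDmin⟩ := exists_min_image (Icc 1 E) g (himage ▸ hT.image f)
  have hET : E ≤ #T := by simpa [himage] using card_image_le (s := T) (f := f)
  have hsurj : ∀ i ∈ Icc 1 E, ∃ v ∈ T, f v = i := fun i hi => mem_image.mp (himage ▸ hi)
  have : Nonempty α := hT.to_subtype.map Subtype.val
  choose! s hsT hfs using hsurj
  have hinj : Set.InjOn s (Icc 1 E) := fun i hi j hj h => by rw [← hfs i hi, ← hfs j hj, h]
  have hST : (Icc 1 E).image s ⊆ T := by simpa [image_subset_iff] using hsT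
  have hsumS : ∑ v ∈ (Icc 1 E).image s, g (f v) = ∑ i ∈ Icc 1 E, g i :=
    (sum_image hinj).trans (sum_congr rfl fun i hi => by rw [hfs i hi])
  have hrest : ((#T - E : ℕ) : ℝ) * g D ≤ ∑ v ∈ T \ (Icc 1 E).image s, g (f v) := by
    have hcard : #(T \ (Icc 1 E).image s) = #T - E := by
      rw [card_sdiff_of_subset hST, card_image_of_injOn hinj, Nat.card_Icc, Nat.add_sub_cancel]
    simpa [hcard] using card_nsmul_le_sum (T \ (Icc 1 E).image s) (g ∘ f) (g D)
      fun v hv => hDmin _ (himage ▸ mem_image_of_mem f (mem_sdiff.mp hv).1)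
  obtain ⟨hD1, hDE⟩ := mem_Icc.mp hD
  have hhead := sum_Icc_add_mul_le_sum_Icc hDE fun i hi =>
    hDmin i (mem_Icc.mpr ⟨hD1.trans (mem_Ioc.mp hi).1.le, (mem_Ioc.mp hi).2⟩)
  refine ⟨D, mem_Icc.mpr ⟨hD1, hDE.trans hET⟩, ?_⟩
  have hcount : ((#T - D : ℕ) : ℝ) = (E - D : ℕ) + (#T - E : ℕ) := by
    rw [← Nat.cast_add, add_comm, Nat.sub_add_sub_cancel hET hDE]
  rw [← sum_sdiff hST, hsumS, hcount]
  linarith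

theorem SimpleGraph.Walk.dist_getVert_of_length_eq_dist {V : Type*} {G : SimpleGraph V} {u v : V}
    (p : G.Walk u v) (hp : p.length = G.dist u v) {i : ℕ} (hi : i ≤ p.length) :
    G.dist u (p.getVert i) = i := by
  have hstart := dist_le (p.take i)
  have hend := dist_le (p.drop i)
  have htriangle := (p.drop i).reachable.dist_triangle_right u
  simp only [Walk.take_length, Walk.drop_length] at hstart hend
  omega

theorem SimpleGraph.Reachable.exists_dist_eq_of_le {V : Type*} {G : SimpleGraph V} {u v : V}
    (h : G.Reachable u v) {d : ℕ} (hd : d ≤ G.dist u v) : ∃ w, G.dist u w = d := by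
  obtain ⟨p, hp⟩ := h.exists_walk_length_eq_dist
  exact ⟨p.getVert d, p.dist_getVert_of_length_eq_dist hp (hp ▸ hd)⟩

theorem SimpleGraph.Connected.exists_image_dist_erase_eq_Icc {V : Type*} [Fintype V]
    [DecidableEq V] {G : SimpleGraph V} (hG : G.Connected) (u : V) :
    ∃ E, (univ.erase u).image (G.dist u) = Icc 1 E := by
  refine ⟨univ.sup (G.dist u), ?_⟩
  ext d
  simp only [mem_image, mem_erase, mem_univ, and_true, mem_Icc]
  constructor
  · rintro ⟨v, hvu, rfl⟩
    exact ⟨hG.pos_dist_of_ne hvu.symm, le_sup (mem_univ v)⟩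
  · rintro ⟨hd1, hdE⟩
    obtain ⟨v, -, hv⟩ := exists_mem_eq_sup univ ⟨u, mem_univ u⟩ (G.dist u)
    obtain ⟨w, hw⟩ := (hG u v).exists_dist_eq_of_le (hv ▸ hdE)
    refine ⟨w, ?_, hw⟩
    rintro rfl
    rw [dist_self] at hw
    omega

theorem stmt3 {V : Type*} [Fintype V] (G : SimpleGraph V) (hG : G.Connected)
    (n : ℕ) (hn : n = Fintype.card V) (h2 : 2 ≤ n)
    (lam : ℝ) (u : V) :
    (Finset.Icc 1 (n - 1)).inf' (Finset.nonempty_Icc.mpr (by omega))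
        (fun D => (∑ i ∈ Finset.Icc 1 D, (i : ℝ) * lam ^ i)
          + ((n : ℝ) - D - 1) * D * lam ^ D)
      ≤ tExp G lam u := by
  classical
  have hcard : #(univ.erase u) = n - 1 := by rw [card_erase_of_mem (mem_univ u), card_univ, hn]
  have hne : (univ.erase u).Nonempty := by rw [← card_pos, hcard]; omega
  obtain ⟨E, hE⟩ := hG.exists_image_dist_erase_eq_Icc u
  obtain ⟨D, hD, hle⟩ := exists_sum_Icc_add_mul_le_sum_comp hne hE fun d => (d : ℝ) * lam ^ d
  rw [hcard] at hD hle
  have hcount : ((n - 1 - D : ℕ) : ℝ) = (n : ℝ) - D - 1 := by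
    rw [Nat.cast_sub (mem_Icc.mp hD).2, Nat.cast_sub (by omega)]; ring
  calc _ ≤ (∑ i ∈ Icc 1 D, (i : ℝ) * lam ^ i) + ((n : ℝ) - D - 1) * D * lam ^ D :=
        inf'_le _ hD
    _ ≤ tExp G lam u := by
        rw [← hcount, mul_assoc, tExp]
        -- `tExp` erases `u` with `Classical.decEq V`, not the instance chosen by `classical`
        convert hle
end
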